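/- Let A be a semiperfect ring, e and f primitive idempotents in A, and suppose Ae ≅ Af as left A-modules. Then e and f are conjugate in A, i.e., there exists a unit u ∈ A with f = u e u⁻¹. -/

import Mathlib

/-- An idempotent `e` is primitive if it is nonzero and is not the sum of two nonzero
orthogonal idempotents. -/
def IsPrimitiveIdem {A : Type*} [Ring A] (e : A) : Prop :=
  IsIdempotentElem e ∧ e ≠ 0 ∧
    ∀ a b : A, IsIdempotentElem a → IsIdempotentElem b → a * b = 0 → b * a = 0 →
      a ≠ 0 → b ≠ 0 → a + b ≠ e

/-- An idempotent `e` is local if it is nonzero and the corner ring `eAe` (with identity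
`e`) is a local ring: for every `x`, either `exe` or `e - exe` is invertible in `eAe`. -/
def IsLocalIdem {A : Type*} [Ring A] (e : A) : Prop :=
  IsIdempotentElem e ∧ e ≠ 0 ∧
    ∀ x : A,
      (∃ y : A, y = e * y * e ∧ (e * x * e) * y = e ∧ y * (e * x * e) = e) ∨
      (∃ y : A, y = e * y * e ∧ (e - e * x * e) * y = e ∧ y * (e - e * x * e) = e)

/-- A ring is semiperfect if `1` is a sum of mutually orthogonal local idempotents. -/
def SemiperfectRing' (A : Type*) [Ring A] : Prop :=
  ∃ (n : ℕ) (e : Fin n → A), (∀ i, IsLocalIdem (e i)) ∧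
    (∀ i j, i ≠ j → e i * e j = 0) ∧ (∑ i, e i) = 1

namespace SemiperfConj

open Submodule

variable {A : Type*} [Ring A]


lemma isUnit_one_sub_comm {a b : A} (h : IsUnit (1 - a * b)) : IsUnit (1 - b * a) := by
  obtain ⟨u, hu⟩ := h
  have h1 : (1 - a * b) * ↑u⁻¹ = 1 := by rw [← hu]; exact u.mul_inv
  have h2 : (↑u⁻¹ : A) * (1 - a * b) = 1 := by rw [← hu]; exact u.inv_mul
  refine ⟨⟨1 - b * a, 1 + b * ↑u⁻¹ * a, ?_, ?_⟩, rfl⟩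
  · have e : (1 - b * a) * (1 + b * ↑u⁻¹ * a) = 1 - b * a + b * ((1 - a * b) * ↑u⁻¹) * a := by
      noncomm_ring
    rw [e, h1]; noncomm_ring
  · have e : (1 + b * ↑u⁻¹ * a) * (1 - b * a) = 1 - b * a + b * (↑u⁻¹ * (1 - a * b)) * a := by
      noncomm_ring
    rw [e, h2]; noncomm_ring

/-- The Jacobson radical, defined elementwise. -/
def rad (A : Type*) [Ring A] : Submodule A A where
  carrier := {x | ∀ s : A, IsUnit (1 - s * x)}
  zero_mem' := by intro s; simp
  add_mem' := by
    intro x y hx hy s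
    obtain ⟨u, hu⟩ := hx s
    have h1 : (1 - s * x) * ↑u⁻¹ = 1 := by rw [← hu]; exact u.mul_inv
    have key : 1 - s * (x + y) = (1 - s * x) * (1 - ↑u⁻¹ * s * y) := by
      have h2 : (1 - s * x) * (↑u⁻¹ * s * y) = s * y := by
        rw [show (↑u⁻¹ * s * y : A) = ↑u⁻¹ * (s * y) by rw [mul_assoc], ← mul_assoc, h1, one_mul]
      calc 1 - s * (x + y) = (1 - s * x) - s * y := by noncomm_ring
        _ = (1 - s * x) - (1 - s * x) * (↑u⁻¹ * s * y) := by rw [h2]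
        _ = (1 - s * x) * (1 - ↑u⁻¹ * s * y) := by noncomm_ring
    rw [key, ← hu]
    exact u.isUnit.mul (by simpa [mul_assoc] using hy (↑u⁻¹ * s))
  smul_mem' := by
    intro c x hx s
    simpa [smul_eq_mul, mul_assoc] using hx (s * c)

lemma rad.mul_right {x : A} (hx : x ∈ rad A) (r : A) : x * r ∈ rad A := by
  intro s
  have h1 : IsUnit (1 - r * (s * x)) := by simpa [mul_assoc] using hx (r * s)
  have := isUnit_one_sub_comm h1
  simpa [mul_assoc] using this

lemma rad.one_sub {x : A} (hx : x ∈ rad A) : IsUnit (1 - x) := by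
  simpa using hx 1

lemma rad.idem_eq_zero {x : A} (hx : x ∈ rad A) (hidem : x * x = x) : x = 0 := by
  obtain ⟨u, hu⟩ := rad.one_sub hx
  have h1 : (1 - x) * ↑u⁻¹ = 1 := by rw [← hu]; exact u.mul_inv
  have h2 : x * (1 - x) = 0 := by rw [mul_sub, hidem, mul_one, sub_self]
  calc x = x * ((1 - x) * ↑u⁻¹) := by rw [h1, mul_one]
    _ = x * (1 - x) * ↑u⁻¹ := by rw [mul_assoc]
    _ = 0 := by rw [h2, zero_mul]

lemma rad.sub_mul_left_right {x y : A} (h : x - y ∈ rad A) (l r : A) :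
    l * x * r - l * y * r ∈ rad A := by
  have h1 : l * x - l * y ∈ rad A := by
    have := (rad A).smul_mem l h
    simpa [smul_eq_mul, mul_sub] using this
  have := rad.mul_right h1 r
  simpa [sub_mul] using this

/-- Key corner-ring computation: if `t*g = t` and `g - g*t*g` is invertible in the
corner ring `gAg`, then `1 - t` is a unit. -/
lemma corner_unit {g t y : A} (hg : g * g = g) (hy : y = g * y * g)
    (h1 : (g - g * t * g) * y = g) (h2 : y * (g - g * t * g) = g) (ht : t * g = t) :
    IsUnit (1 - t) := by
  have hgy : g * y = y := by
    calc g * y = g * (g * y * g) := by rw [← hy]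
      _ = g * g * y * g := by rw [← mul_assoc, ← mul_assoc]
      _ = g * y * g := by rw [hg]
      _ = y := hy.symm
  have hyg : y * g = y := by
    calc y * g = g * y * g * g := by rw [← hy]
      _ = g * y * (g * g) := by rw [mul_assoc]
      _ = g * y * g := by rw [hg]
      _ = y := hy.symm
  have hgtg : g * t * g = g * t := by rw [mul_assoc, ht]
  have h3 : g * t * y = y - g := by
    have e := h1
    rw [sub_mul, hgtg, hgy] at e
    exact eq_sub_of_add_eq (by rw [add_comm]; exact (sub_eq_iff_eq_add.mp e).symm)
  have h4 : y * t = y - g := by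
    have e := h2
    rw [mul_sub, hyg, hgtg, ← mul_assoc, hyg] at e
    exact eq_sub_of_add_eq (by rw [add_comm]; exact (sub_eq_iff_eq_add.mp e).symm)
  have e1 : t * (1 - g) = 0 := by rw [mul_sub, mul_one, ht, sub_self]
  refine ⟨⟨1 - t, y + (1 - g) + (1 - g) * (t * y), ?_, ?_⟩, rfl⟩
  · calc (1 - t) * (y + (1 - g) + (1 - g) * (t * y))
        = y + (1 - g) + (1 - g) * (t * y) - t * y - (t * (1 - g))
          - (t * (1 - g)) * (t * y) := by noncomm_ring
      _ = y + 1 - g - g * (t * y) := by rw [e1]; noncomm_ring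
      _ = y + 1 - g - (y - g) := by rw [← mul_assoc, h3]
      _ = 1 := by noncomm_ring
  · calc (y + (1 - g) + (1 - g) * (t * y)) * (1 - t)
        = y + (1 - g) + (1 - g) * (t * y) - (y * t) - (1 - g) * t
          - (1 - g) * (t * (y * t)) := by noncomm_ring
      _ = y + (1 - g) + (1 - g) * (t * y) - (y - g) - (1 - g) * t
          - (1 - g) * (t * (y - g)) := by rw [h4]
      _ = y + (1 - g) + (1 - g) * (t * y) - (y - g) - (1 - g) * t
          - (1 - g) * (t * y) + (1 - g) * (t * g) := by noncomm_ring
      _ = y + (1 - g) - (y - g) - (1 - g) * t + (1 - g) * t := by rw [ht]; noncomm_ring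
      _ = 1 := by noncomm_ring


lemma mem_span_idem {p : A} (hp : p * p = p) {x : A} :
    x ∈ Submodule.span A {p} ↔ x * p = x := by
  rw [Submodule.mem_span_singleton]
  constructor
  · rintro ⟨r, rfl⟩; rw [smul_eq_mul, mul_assoc, hp]
  · intro h; exact ⟨x, by rw [smul_eq_mul, h]⟩

lemma corner_inv {h j : A} (hh : h * h = h) (hj : j ∈ rad A) (hjh : h * j = j)
    (hhj : j * h = j) :
    ∃ s : A, s * h = s ∧ h * s = s ∧ (h - j) * s = h ∧ s * (h - j) = h ∧ s - h ∈ rad A := by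
  obtain ⟨u, hu⟩ := rad.one_sub hj
  have h1 : (1 - j) * ↑u⁻¹ = 1 := by rw [← hu]; exact u.mul_inv
  have h2 : (↑u⁻¹ : A) * (1 - j) = 1 := by rw [← hu]; exact u.inv_mul
  set v : A := ↑u⁻¹ with hv
  have e3 : h * (1 - j) = h - j := by rw [mul_sub, mul_one, hjh]
  have e4 : (1 - j) * h = h - j := by rw [sub_mul, one_mul, hhj]
  refine ⟨h * v * h, ?_, ?_, ?_, ?_, ?_⟩
  · rw [mul_assoc (h * v) h h, hh]
  · rw [← mul_assoc h (h * v) h, ← mul_assoc h h v, hh]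
  · calc (h - j) * (h * v * h) = (h - j) * h * v * h := by
          rw [← mul_assoc, ← mul_assoc]
      _ = (h - j) * v * h := by rw [sub_mul, hh, hhj]
      _ = h * ((1 - j) * v) * h := by rw [← e3, mul_assoc h (1 - j) v]
      _ = h := by rw [h1, mul_one, hh]
  · calc h * v * h * (h - j) = h * v * (h * (h - j)) := by rw [mul_assoc (h * v)]
      _ = h * v * (h - j) := by rw [mul_sub, hh, hjh]
      _ = h * (v * (1 - j)) * h := by rw [← e4, ← mul_assoc, mul_assoc h v (1 - j)]
      _ = h := by rw [h2, mul_one, hh]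
  · have h5 : v - 1 ∈ rad A := by
      have h6 : v - v * j = 1 := by
        have := h2; rwa [mul_sub, mul_one] at this
      have hv1 : v - 1 = v * j := by rw [← h6]; abel
      rw [hv1]
      have := (rad A).smul_mem v hj
      simpa [smul_eq_mul] using this
    have key := rad.sub_mul_left_right h5 h h
    simpa [mul_one, hh] using key

lemma mem_rad_or_gen {g : A} (hloc : IsLocalIdem g) {x : A} (hx : x * g = x) :
    x ∈ rad A ∨ ∃ r : A, r * x = g := by
  by_cases hgen : ∃ r : A, r * x = g
  · exact Or.inr hgen
  refine Or.inl ?_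
  intro s
  have hg : g * g = g := hloc.1
  rcases hloc.2.2 (s * x) with ⟨y, hy, hy1, hy2⟩ | ⟨y, hy, hy1, hy2⟩
  · exfalso
    apply hgen
    refine ⟨y * (g * s), ?_⟩
    have e : g * (s * x) * g = g * (s * x) := by
      rw [mul_assoc g (s * x) g, mul_assoc s x g, hx]
    rw [e] at hy2
    calc y * (g * s) * x = y * (g * (s * x)) := by rw [mul_assoc, mul_assoc]
      _ = g := by rw [← mul_assoc] at hy2 ⊢; exact hy2
  · exact corner_unit hg hy hy1 hy2 (by rw [mul_assoc, hx])


variable {V : Type*} [AddCommGroup V] [Module A V]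
variable {W : Type*} [AddCommGroup W] [Module A W]

lemma map_isAtom {f : V →ₗ[A] W} {P : Submodule A V} (hP : IsAtom P)
    (hne : P.map f ≠ ⊥) : IsAtom (P.map f) := by
  refine ⟨hne, fun b hb => ?_⟩
  by_contra hbne
  obtain ⟨x, hxb, hx0⟩ := (Submodule.ne_bot_iff _).1 hbne
  obtain ⟨p, hp, rfl⟩ := hb.le hxb
  have hpne : p ≠ 0 := fun hzero => hx0 (by rw [hzero, map_zero])
  have hC : P ≤ Submodule.comap f b := by
    rcases (inf_le_left : P ⊓ Submodule.comap f b ≤ P).lt_or_eq with hlt | heq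
    · exfalso
      have hbot := hP.2 _ hlt
      have hmem : p ∈ P ⊓ Submodule.comap f b := ⟨hp, hxb⟩
      rw [hbot] at hmem
      exact hpne hmem
    · rw [← heq]; exact inf_le_right
  have hle : P.map f ≤ b := Submodule.map_le_iff_le_comap.2 hC
  exact hb.ne (le_antisymm hb.le hle)

/-- Restriction of a linear map to a submodule on which it is injective. -/
noncomputable def equivMapOfKer (f : V →ₗ[A] W) (P : Submodule A V)
    (h : ∀ x ∈ P, f x = 0 → x = 0) : ↥P ≃ₗ[A] ↥(P.map f) :=
  LinearEquiv.ofBijective ((f.domRestrict P).codRestrict (P.map f)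
      (fun x => ⟨↑x, x.2, rfl⟩))
    ⟨by
      intro x y hxy
      have hval : f ↑x = f ↑y := congrArg Subtype.val hxy
      have hsub : f (↑x - ↑y) = 0 := by rw [map_sub, hval, sub_self]
      have := h _ (sub_mem x.2 y.2) hsub
      exact Subtype.ext (sub_eq_zero.1 this),
     by
      rintro ⟨w, hw⟩
      obtain ⟨p, hp, rfl⟩ := hw
      exact ⟨⟨p, hp⟩, rfl⟩⟩

@[simp] lemma equivMapOfKer_apply (f : V →ₗ[A] W) (P : Submodule A V)
    (h : ∀ x ∈ P, f x = 0 → x = 0) (x : ↥P) :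
    (equivMapOfKer f P h x : W) = f ↑x := rfl

lemma comap_subtype_isAtom {X M : Submodule A V} (hMX : M ≤ X) (hM : IsAtom M) :
    IsAtom (M.comap X.subtype) := by
  have hmc : Submodule.map X.subtype (M.comap X.subtype) = M := by
    rw [Submodule.map_comap_subtype, inf_eq_right.2 hMX]
  constructor
  · intro hbot
    rw [hbot, Submodule.map_bot] at hmc
    exact hM.1 hmc.symm
  · intro b hb
    have hcb : Submodule.comap X.subtype (Submodule.map X.subtype b) = b :=
      Submodule.comap_map_eq_of_injective (Submodule.injective_subtype X) b
    have hb' : Submodule.map X.subtype b ≤ M := hmc ▸ Submodule.map_mono hb.le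
    rcases hb'.lt_or_eq with hlt | heq
    · have := hM.2 _ hlt
      rw [← hcb, this, Submodule.comap_bot, Submodule.ker_subtype]
    · exfalso
      apply hb.ne
      rw [← hcb, heq, ← hmc,
        Submodule.comap_map_eq_of_injective (Submodule.injective_subtype X)]

lemma exists_conj_aut_of_disjoint {M M' K' : Submodule A V} (hMne : M ≠ ⊥)
    (hM' : IsAtom M') (h2 : IsCompl M' K') (hd : Disjoint M K') :
    ∃ Φ : V ≃ₗ[A] V, M.map (Φ : V →ₗ[A] V) = M' := by
  haveI : IsSimpleModule A ↥M' := isSimpleModule_iff_isAtom.2 hM'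
  haveI hsimp : IsSimpleModule A (V ⧸ K') :=
    IsSimpleModule.congr (Submodule.quotientEquivOfIsCompl K' M' h2.symm)
  have hMq : M.map K'.mkQ = ⊤ := by
    rcases eq_bot_or_eq_top (M.map K'.mkQ) with hbot | htop
    · exfalso
      obtain ⟨x, hxM, hx0⟩ := (Submodule.ne_bot_iff _).1 hMne
      have hmem : K'.mkQ x ∈ M.map K'.mkQ := Submodule.mem_map_of_mem hxM
      rw [hbot, Submodule.mem_bot] at hmem
      have hxK' : x ∈ K' := by
        rwa [Submodule.mkQ_apply, Submodule.Quotient.mk_eq_zero] at hmem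
      exact hx0 (hd.le_bot ⟨hxM, hxK'⟩)
    · exact htop
  have hcompl : IsCompl M K' := by
    refine ⟨hd, ?_⟩
    rw [codisjoint_iff_le_sup]
    intro x _
    have hmem : K'.mkQ x ∈ M.map K'.mkQ := by rw [hMq]; trivial
    obtain ⟨m, hm, hmx⟩ := hmem
    have hXK : x - m ∈ K' := by
      rw [Submodule.mkQ_apply, Submodule.mkQ_apply] at hmx
      exact (Submodule.Quotient.eq K').1 hmx.symm
    exact Submodule.mem_sup.2 ⟨m, hm, x - m, hXK, by abel⟩
  set pM' := M'.projectionOnto K' h2 with hpM'def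
  have hτinj : Function.Injective (pM'.domRestrict M) := by
    intro x y hxy
    have hsub : (↑x - ↑y : V) ∈ K' := by
      rw [← Submodule.linearProjOfIsCompl_apply_eq_zero_iff h2, map_sub]
      have : pM' ↑x = pM' ↑y := hxy
      rw [this, sub_self]
    have := hd.le_bot ⟨sub_mem x.2 y.2, hsub⟩
    exact Subtype.ext (sub_eq_zero.1 this)
  have hτsurj : Function.Surjective (pM'.domRestrict M) := by
    intro m'
    have hmem : (↑m' : V) ∈ M ⊔ K' := by rw [hcompl.codisjoint.eq_top]; trivial
    obtain ⟨m, hm, k, hk, hmk⟩ := Submodule.mem_sup.1 hmem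
    refine ⟨⟨m, hm⟩, ?_⟩
    have hmm : m = ↑m' - k := by rw [← hmk]; abel
    have : pM' m = m' := by
      rw [hmm, map_sub, Submodule.linearProjOfIsCompl_apply_left h2 m',
        Submodule.projectionOnto_apply_of_mem_right h2 hk, sub_zero]
    simpa [LinearMap.domRestrict_apply] using this
  let τ : ↥M ≃ₗ[A] ↥M' := LinearEquiv.ofBijective (pM'.domRestrict M) ⟨hτinj, hτsurj⟩
  set pM := M.projectionOnto K' hcompl with hpMdef
  set pK := K'.projectionOnto M hcompl.symm with hpKdef
  set pK2 := K'.projectionOnto M' h2.symm with hpK2def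
  let Φl : V →ₗ[A] V := M'.subtype ∘ₗ τ.toLinearMap ∘ₗ pM + K'.subtype ∘ₗ pK
  let Ψl : V →ₗ[A] V := M.subtype ∘ₗ τ.symm.toLinearMap ∘ₗ pM' + K'.subtype ∘ₗ pK2
  have hΦl : ∀ x : V, Φl x = ↑(τ (pM x)) + ↑(pK x) := fun x => rfl
  have hΨl : ∀ x : V, Ψl x = ↑(τ.symm (pM' x)) + ↑(pK2 x) := fun x => rfl
  have hΦΨ : ∀ x, Φl (Ψl x) = x := by
    intro x
    rw [hΨl, hΦl]
    simp only [map_add]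
    rw [Submodule.linearProjOfIsCompl_apply_left hcompl (τ.symm (pM' x)),
      Submodule.projectionOnto_apply_of_mem_right hcompl (pK2 x).2,
      Submodule.projectionOnto_apply_of_mem_right hcompl.symm (τ.symm (pM' x)).2,
      Submodule.linearProjOfIsCompl_apply_left hcompl.symm (pK2 x)]
    simp only [map_zero, Submodule.coe_zero, add_zero, zero_add,
      LinearEquiv.apply_symm_apply]
    exact Submodule.projection_add_projection_eq_self h2 x
  have hΨΦ : ∀ x, Ψl (Φl x) = x := by
    intro x
    rw [hΦl, hΨl]
    simp only [map_add]
    rw [Submodule.linearProjOfIsCompl_apply_left h2 (τ (pM x)),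
      Submodule.projectionOnto_apply_of_mem_right h2 (pK x).2,
      Submodule.projectionOnto_apply_of_mem_right h2.symm (τ (pM x)).2,
      Submodule.linearProjOfIsCompl_apply_left h2.symm (pK x)]
    simp only [map_zero, Submodule.coe_zero, add_zero, zero_add,
      LinearEquiv.symm_apply_apply]
    exact Submodule.projection_add_projection_eq_self hcompl x
  refine ⟨LinearEquiv.ofLinear Φl Ψl (LinearMap.ext hΦΨ) (LinearMap.ext hΨΦ), ?_⟩
  apply le_antisymm
  · rintro _ ⟨m, hm, rfl⟩
    show Φl m ∈ M'
    rw [hΦl, Submodule.projectionOnto_apply_of_mem_right hcompl.symm hm]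
    rw [Submodule.coe_zero, add_zero]
    exact (τ (pM m)).2
  · intro m' hm'
    refine ⟨↑(τ.symm ⟨m', hm'⟩), (τ.symm ⟨m', hm'⟩).2, ?_⟩
    show Φl ↑(τ.symm ⟨m', hm'⟩) = m'
    rw [hΦl, Submodule.linearProjOfIsCompl_apply_left hcompl (τ.symm ⟨m', hm'⟩),
      Submodule.projectionOnto_apply_of_mem_right hcompl.symm (τ.symm ⟨m', hm'⟩).2,
      LinearEquiv.apply_symm_apply]
    rw [Submodule.coe_zero, add_zero]

lemma proj_left' {p q : Submodule A V} (h : IsCompl p q) {x : V} (hx : x ∈ p) :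
    p.projectionOnto q h x = ⟨x, hx⟩ :=
  Submodule.linearProjOfIsCompl_apply_left h ⟨x, hx⟩

lemma map_symm_of_map_eq {e : V ≃ₗ[A] V} {P Q : Submodule A V}
    (h : P.map (e : V →ₗ[A] V) = Q) : Q.map (e.symm : V →ₗ[A] V) = P := by
  subst h
  ext x
  constructor
  · rintro ⟨_, ⟨p, hp, rfl⟩, rfl⟩
    simpa using hp
  · intro hx
    exact ⟨e x, ⟨x, hx, rfl⟩, by simp⟩

set_option maxHeartbeats 1000000 in
lemma exists_conj_aut [IsSemisimpleModule A V] {M M' K K' : Submodule A V}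
    (hM : IsAtom M) (hM' : IsAtom M') (h1 : IsCompl M K) (h2 : IsCompl M' K')
    (σ : ↥M ≃ₗ[A] ↥M') :
    ∃ Φ : V ≃ₗ[A] V, M.map (Φ : V →ₗ[A] V) = M' := by
  by_cases hd : Disjoint M K'
  · exact exists_conj_aut_of_disjoint hM.1 hM' h2 hd
  by_cases hd' : Disjoint M' K
  · obtain ⟨Φ, hΦ⟩ := exists_conj_aut_of_disjoint hM'.1 hM h1 hd'
    exact ⟨Φ.symm, map_symm_of_map_eq hΦ⟩
  have hMK' : M ≤ K' := by
    rcases (inf_le_left : M ⊓ K' ≤ M).lt_or_eq with hlt | heq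
    · exact absurd (disjoint_iff.2 (hM.2 _ hlt)) hd
    · rw [← heq]; exact inf_le_right
  have hM'K : M' ≤ K := by
    rcases (inf_le_left : M' ⊓ K ≤ M').lt_or_eq with hlt | heq
    · exact absurd (disjoint_iff.2 (hM'.2 _ hlt)) hd'
    · rw [← heq]; exact inf_le_right
  have hdMM' : Disjoint M M' := (h2.disjoint.mono_right hMK').symm
  obtain ⟨L, hL⟩ := exists_isCompl (M ⊔ M')
  have h5 : (M ⊔ M') ⊓ (M' ⊔ L) = M' := by
    calc (M ⊔ M') ⊓ (M' ⊔ L) = (M ⊔ M') ⊓ (L ⊔ M') := by rw [sup_comm M' L]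
      _ = (M ⊔ M') ⊓ L ⊔ M' := (inf_sup_assoc_of_le L le_sup_right).symm
      _ = ⊥ ⊔ M' := by rw [disjoint_iff.1 hL.disjoint]
      _ = M' := bot_sup_eq M'
  have hdisj1 : Disjoint M (M' ⊔ L) := by
    have hle : M ⊓ (M' ⊔ L) ≤ M ⊓ M' := by
      have h6 : M ⊓ (M' ⊔ L) ≤ (M ⊔ M') ⊓ (M' ⊔ L) := inf_le_inf_right _ le_sup_left
      rw [h5] at h6
      exact le_inf inf_le_left h6
    rw [disjoint_iff]
    exact le_bot_iff.1 (hle.trans hdMM'.le_bot)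
  have hc1 : IsCompl M (M' ⊔ L) := ⟨hdisj1, by
    rw [codisjoint_iff, ← sup_assoc, hL.codisjoint.eq_top]⟩
  have h5' : (M ⊔ M') ⊓ (M ⊔ L) = M := by
    calc (M ⊔ M') ⊓ (M ⊔ L) = (M ⊔ M') ⊓ (L ⊔ M) := by rw [sup_comm M L]
      _ = (M ⊔ M') ⊓ L ⊔ M := (inf_sup_assoc_of_le L le_sup_left).symm
      _ = ⊥ ⊔ M := by rw [disjoint_iff.1 hL.disjoint]
      _ = M := bot_sup_eq M
  have hdisj1' : Disjoint M' (M ⊔ L) := by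
    have hle : M' ⊓ (M ⊔ L) ≤ M' ⊓ M := by
      have h6 : M' ⊓ (M ⊔ L) ≤ (M ⊔ M') ⊓ (M ⊔ L) := inf_le_inf_right _ le_sup_right
      rw [h5'] at h6
      exact le_inf inf_le_left h6
    rw [disjoint_iff]
    exact le_bot_iff.1 (hle.trans hdMM'.symm.le_bot)
  have hc2 : IsCompl M' (M ⊔ L) := ⟨hdisj1', by
    rw [codisjoint_iff, ← sup_assoc, sup_comm M' M, hL.codisjoint.eq_top]⟩
  have hcL : IsCompl L (M ⊔ M') := hL.symm
  set pMl := M.projectionOnto (M' ⊔ L) hc1 with hpMl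
  set pM'l := M'.projectionOnto (M ⊔ L) hc2 with hpM'l
  set pLl := L.projectionOnto (M ⊔ M') hcL with hpLl
  have hdec : ∀ x : V, (↑(pMl x) + ↑(pM'l x) + ↑(pLl x) : V) = x := by
    intro x
    have hx : x ∈ (M ⊔ M') ⊔ L := by rw [hL.codisjoint.eq_top]; trivial
    obtain ⟨w, hw, l, hl, rfl⟩ := Submodule.mem_sup.1 hx
    obtain ⟨m, hm, m', hm', rfl⟩ := Submodule.mem_sup.1 hw
    have e1 : pMl (m + m' + l) = ⟨m, hm⟩ := by
      rw [map_add, map_add, proj_left' hc1 hm,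
        Submodule.projectionOnto_apply_of_mem_right hc1 (Submodule.mem_sup_left hm'),
        Submodule.projectionOnto_apply_of_mem_right hc1 (Submodule.mem_sup_right hl),
        add_zero, add_zero]
    have e2 : pM'l (m + m' + l) = ⟨m', hm'⟩ := by
      rw [map_add, map_add, proj_left' hc2 hm',
        Submodule.projectionOnto_apply_of_mem_right hc2 (Submodule.mem_sup_left hm),
        Submodule.projectionOnto_apply_of_mem_right hc2 (Submodule.mem_sup_right hl),
        add_zero, zero_add]
    have e3 : pLl (m + m' + l) = ⟨l, hl⟩ := by
      rw [map_add, map_add, proj_left' hcL hl,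
        Submodule.projectionOnto_apply_of_mem_right hcL (Submodule.mem_sup_left hm),
        Submodule.projectionOnto_apply_of_mem_right hcL (Submodule.mem_sup_right hm'),
        zero_add, zero_add]
    rw [e1, e2, e3]
  let Φl : V →ₗ[A] V := M'.subtype ∘ₗ σ.toLinearMap ∘ₗ pMl
    + M.subtype ∘ₗ σ.symm.toLinearMap ∘ₗ pM'l + L.subtype ∘ₗ pLl
  have hΦlx : ∀ x : V, Φl x = ↑(σ (pMl x)) + ↑(σ.symm (pM'l x)) + ↑(pLl x) := fun x => rfl
  have hinv : ∀ x, Φl (Φl x) = x := by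
    intro x
    rw [hΦlx x, hΦlx]
    simp only [map_add]
    rw [Submodule.projectionOnto_apply_of_mem_right hc1
        (Submodule.mem_sup_left (σ (pMl x)).2),
      Submodule.linearProjOfIsCompl_apply_left hc1 (σ.symm (pM'l x)),
      Submodule.projectionOnto_apply_of_mem_right hc1
        (Submodule.mem_sup_right (pLl x).2),
      Submodule.linearProjOfIsCompl_apply_left hc2 (σ (pMl x)),
      Submodule.projectionOnto_apply_of_mem_right hc2
        (Submodule.mem_sup_left (σ.symm (pM'l x)).2),
      Submodule.projectionOnto_apply_of_mem_right hc2
        (Submodule.mem_sup_right (pLl x).2),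
      Submodule.projectionOnto_apply_of_mem_right hcL
        (Submodule.mem_sup_right (σ (pMl x)).2),
      Submodule.projectionOnto_apply_of_mem_right hcL
        (Submodule.mem_sup_left (σ.symm (pM'l x)).2),
      Submodule.linearProjOfIsCompl_apply_left hcL (pLl x)]
    simp only [map_zero, Submodule.coe_zero, add_zero, zero_add,
      LinearEquiv.apply_symm_apply, LinearEquiv.symm_apply_apply]
    rw [add_comm (↑(pM'l x) : V) (↑(pMl x) : V)]
    exact hdec x
  refine ⟨LinearEquiv.ofLinear Φl Φl (LinearMap.ext hinv) (LinearMap.ext hinv), ?_⟩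
  apply le_antisymm
  · rintro _ ⟨m, hm, rfl⟩
    show Φl m ∈ M'
    rw [hΦlx m, proj_left' hc1 hm,
      Submodule.projectionOnto_apply_of_mem_right hc2 (Submodule.mem_sup_left hm),
      Submodule.projectionOnto_apply_of_mem_right hcL (Submodule.mem_sup_left hm)]
    simp only [map_zero, Submodule.coe_zero, add_zero]
    exact (σ ⟨m, hm⟩).2
  · intro m' hm'
    refine ⟨↑(σ.symm ⟨m', hm'⟩), (σ.symm ⟨m', hm'⟩).2, ?_⟩
    show Φl ↑(σ.symm ⟨m', hm'⟩) = m'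
    rw [hΦlx, Submodule.linearProjOfIsCompl_apply_left hc1 (σ.symm ⟨m', hm'⟩),
      Submodule.projectionOnto_apply_of_mem_right hc2
        (Submodule.mem_sup_left (σ.symm ⟨m', hm'⟩).2),
      Submodule.projectionOnto_apply_of_mem_right hcL
        (Submodule.mem_sup_left (σ.symm ⟨m', hm'⟩).2)]
    simp only [map_zero, Submodule.coe_zero, add_zero, LinearEquiv.apply_symm_apply]
lemma map_ne_bot_of_injective {f : V →ₗ[A] W} (hf : Function.Injective f)
    {P : Submodule A V} (hP : P ≠ ⊥) : P.map f ≠ ⊥ := by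
  intro h
  apply hP
  rw [eq_bot_iff]
  intro x hx
  have hfx : f x ∈ P.map f := Submodule.mem_map_of_mem hx
  rw [h, Submodule.mem_bot] at hfx
  have : x = 0 := hf (by rw [hfx, map_zero])
  exact (Submodule.mem_bot _).2 this

theorem cancel (n : ℕ) :
    ∀ {V : Type*} [AddCommGroup V] [Module A V] [IsSemisimpleModule A V]
    (X Y X' Y' : Submodule A V), IsCompl X Y → IsCompl X' Y' →
    ∀ (F : Fin n → Submodule A V), (∀ i, IsAtom (F i) ∨ F i = ⊥) → X = ⨆ i, F i →
    (↥X ≃ₗ[A] ↥X') → Nonempty (↥Y ≃ₗ[A] ↥Y') := by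
  induction n with
  | zero =>
    intro V _ _ _ X Y X' Y' hXY hXY' F hF hsup ψ
    have hX : X = ⊥ := by rw [hsup]; exact iSup_of_empty F
    have hX' : X' = ⊥ := by
      rw [eq_bot_iff]
      intro x hx
      have h0 : ψ.symm ⟨x, hx⟩ = 0 := by
        have hmem : ↑(ψ.symm ⟨x, hx⟩) ∈ (⊥ : Submodule A V) := hX ▸ (ψ.symm ⟨x, hx⟩).2
        exact Subtype.ext (by simpa using hmem)
      have hx0 : (⟨x, hx⟩ : ↥X') = 0 := by
        have := congrArg ψ h0
        rwa [LinearEquiv.apply_symm_apply, map_zero] at this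
      simpa using congrArg Subtype.val hx0
    have hY : Y = ⊤ := by
      have h1 := codisjoint_iff.1 hXY.codisjoint
      rwa [hX, bot_sup_eq] at h1
    have hY' : Y' = ⊤ := by
      have h1 := codisjoint_iff.1 hXY'.codisjoint
      rwa [hX', bot_sup_eq] at h1
    exact ⟨LinearEquiv.ofEq Y Y' (hY.trans hY'.symm)⟩
  | succ n ih =>
    intro V _ _ _ X Y X' Y' hXY hXY' F hF hsup ψ
    set M := F 0 with hMdef
    set R := ⨆ i : Fin n, F i.succ with hRdef
    have hsplit : X = M ⊔ R := by
      rw [hsup]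
      apply le_antisymm
      · exact iSup_le (fun i => Fin.cases le_sup_left
          (fun j => le_sup_of_le_right (le_iSup (fun k : Fin n => F k.succ) j)) i)
      · exact sup_le (le_iSup F 0) (iSup_le fun j => le_iSup F j.succ)
    by_cases hMR : M ≤ R
    · have hXR : X = R := by rw [hsplit, sup_eq_right.2 hMR]
      exact ih X Y X' Y' hXY hXY' (fun i => F i.succ) (fun i => hF i.succ) hXR ψ
    have hMatom : IsAtom M := (hF 0).resolve_right (fun h => hMR (by rw [hMdef, h]; exact bot_le))
    have hdMR : Disjoint M R := by
      rcases (inf_le_left : M ⊓ R ≤ M).lt_or_eq with hlt | heq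
      · exact disjoint_iff.2 (hMatom.2 _ hlt)
      · exact absurd (inf_eq_left.1 heq) hMR
    have hMX : M ≤ X := hsplit ▸ le_sup_left
    have hRX : R ≤ X := hsplit ▸ le_sup_right
    -- transport of M and R through ψ
    set jmap : ↥X →ₗ[A] V := X'.subtype ∘ₗ (ψ : ↥X →ₗ[A] ↥X') with hjdef
    have hjinj : Function.Injective jmap := by
      rw [hjdef, LinearMap.coe_comp]
      exact (Submodule.injective_subtype X').comp ψ.injective
    have hjker : ∀ x : ↥X, jmap x = 0 → x = 0 := by
      intro x hx
      exact hjinj (by rw [hx, map_zero])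
    have hjrange : LinearMap.range jmap = X' := by
      rw [hjdef, LinearMap.range_comp, LinearEquiv.range, Submodule.map_top,
        Submodule.range_subtype]
    set M' := (M.comap X.subtype).map jmap with hM'def
    set R' := (R.comap X.subtype).map jmap with hR'def
    have hM'atom : IsAtom M' := by
      have h1 := comap_subtype_isAtom hMX hMatom
      exact map_isAtom h1 (map_ne_bot_of_injective hjinj h1.1)
    have hsupM'R' : M' ⊔ R' = X' := by
      have hcsup : (M.comap X.subtype) ⊔ (R.comap X.subtype) = ⊤ := by
        rw [eq_top_iff]
        rintro z -
        have hz : (↑z : V) ∈ M ⊔ R := by rw [← hsplit]; exact z.2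
        obtain ⟨m, hm, r, hr, hmr⟩ := Submodule.mem_sup.1 hz
        exact Submodule.mem_sup.2 ⟨⟨m, hMX hm⟩, hm, ⟨r, hRX hr⟩, hr, Subtype.ext hmr⟩
      calc M' ⊔ R' = ((M.comap X.subtype) ⊔ (R.comap X.subtype)).map jmap :=
            (Submodule.map_sup _ _ _).symm
        _ = (⊤ : Submodule A ↥X).map jmap := by rw [hcsup]
        _ = X' := by rw [Submodule.map_top, hjrange]
    have hM'X' : M' ≤ X' := hsupM'R' ▸ le_sup_left
    have hR'X' : R' ≤ X' := hsupM'R' ▸ le_sup_right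
    have hdM'R' : Disjoint M' R' := by
      rw [disjoint_iff, eq_bot_iff]
      rintro x ⟨hxM', hxR'⟩
      obtain ⟨p, hp, rfl⟩ := hxM'
      obtain ⟨q, hq, hqx⟩ := hxR'
      have hqp : q = p := hjinj hqx
      subst hqp
      have hq0 : (↑q : V) ∈ M ⊓ R := ⟨hp, hq⟩
      have : (↑q : V) = 0 := (Submodule.mem_bot _).1 (hdMR.le_bot hq0)
      have hq0' : q = 0 := Subtype.ext this
      rw [hq0', map_zero]
      exact Submodule.zero_mem _
    -- module isomorphisms between the pieces
    have hcomapMker : ∀ x ∈ M.comap X.subtype, jmap x = 0 → x = 0 := fun x _ h => hjker x h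
    have hcomapRker : ∀ x ∈ R.comap X.subtype, jmap x = 0 → x = 0 := fun x _ h => hjker x h
    set σ : ↥M ≃ₗ[A] ↥M' :=
      (Submodule.comapSubtypeEquivOfLe hMX).symm.trans
        (equivMapOfKer jmap (M.comap X.subtype) hcomapMker) with hσdef
    set ψ₂ : ↥R ≃ₗ[A] ↥R' :=
      (Submodule.comapSubtypeEquivOfLe hRX).symm.trans
        (equivMapOfKer jmap (R.comap X.subtype) hcomapRker) with hψ₂def
    -- complements
    have hcM : IsCompl M (R ⊔ Y) := by
      constructor
      · have h7 : (R ⊔ Y) ⊓ X = R := by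
          rw [sup_inf_assoc_of_le Y hRX, disjoint_iff.1 hXY.disjoint.symm, sup_bot_eq]
        have hle : M ⊓ (R ⊔ Y) ≤ M ⊓ R := by
          refine le_inf inf_le_left ?_
          calc M ⊓ (R ⊔ Y) ≤ X ⊓ (R ⊔ Y) := inf_le_inf_right _ hMX
            _ = R := by rw [inf_comm, h7]
        rw [disjoint_iff]
        exact le_bot_iff.1 (hle.trans hdMR.le_bot)
      · rw [codisjoint_iff, ← sup_assoc, ← hsplit, hXY.codisjoint.eq_top]
    have hcM' : IsCompl M' (R' ⊔ Y') := by
      constructor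
      · have h7 : (R' ⊔ Y') ⊓ X' = R' := by
          rw [sup_inf_assoc_of_le Y' hR'X', disjoint_iff.1 hXY'.disjoint.symm, sup_bot_eq]
        have hle : M' ⊓ (R' ⊔ Y') ≤ M' ⊓ R' := by
          refine le_inf inf_le_left ?_
          calc M' ⊓ (R' ⊔ Y') ≤ X' ⊓ (R' ⊔ Y') := inf_le_inf_right _ hM'X'
            _ = R' := by rw [inf_comm, h7]
        rw [disjoint_iff]
        exact le_bot_iff.1 (hle.trans hdM'R'.le_bot)
      · rw [codisjoint_iff, ← sup_assoc, hsupM'R', hXY'.codisjoint.eq_top]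
    obtain ⟨Φ, hΦ⟩ := exists_conj_aut hMatom hM'atom hcM hcM' σ
    -- pass to the quotient by M'
    set Q : V →ₗ[A] V ⧸ M' := M'.mkQ ∘ₗ (Φ : V →ₗ[A] V) with hQdef
    have hQapp : ∀ x : V, Q x = M'.mkQ (Φ x) := fun x => rfl
    have hkerm : ∀ x : V, Q x = 0 ↔ x ∈ M := by
      intro x
      rw [hQapp, Submodule.mkQ_apply, Submodule.Quotient.mk_eq_zero]
      constructor
      · intro hx
        rw [← hΦ] at hx
        obtain ⟨m, hm, hmx⟩ := hx
        have : m = x := Φ.injective hmx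
        rwa [← this]
      · intro hx
        rw [← hΦ]
        exact Submodule.mem_map_of_mem hx
    have hQsurj : Function.Surjective Q := by
      intro z
      obtain ⟨v, rfl⟩ := Submodule.mkQ_surjective M' z
      exact ⟨Φ.symm v, by rw [hQapp, LinearEquiv.apply_symm_apply]⟩
    set X₂ := R.map Q with hX₂def
    set Y₂ := Y.map Q with hY₂def
    set X₂' := R'.map M'.mkQ with hX₂'def
    set Y₂' := Y'.map M'.mkQ with hY₂'def
    have hcompl₂ : IsCompl X₂ Y₂ := by
      constructor
      · rw [disjoint_iff, eq_bot_iff]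
        rintro x ⟨hx1, hx2⟩
        obtain ⟨r, hr, hrx⟩ := hx1
        obtain ⟨y, hy, hyx⟩ := hx2
        have hsub : Q (r - y) = 0 := by rw [map_sub, hrx, hyx, sub_self]
        have hrM : r - y ∈ M := (hkerm _).1 hsub
        have hrRY : r - y ∈ R ⊔ Y := sub_mem (Submodule.mem_sup_left hr)
          (Submodule.mem_sup_right hy)
        have : r - y = 0 := (Submodule.mem_bot _).1 (hcM.disjoint.le_bot ⟨hrM, hrRY⟩)
        have hry : r = y := by rwa [sub_eq_zero] at this
        have hrXY : r ∈ X ⊓ Y := ⟨hRX hr, hry ▸ hy⟩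
        have hr0 : r = 0 := (Submodule.mem_bot _).1 (hXY.disjoint.le_bot hrXY)
        rw [← hrx, hr0, map_zero]
        exact Submodule.zero_mem _
      · rw [codisjoint_iff, eq_top_iff]
        rintro z -
        obtain ⟨v, rfl⟩ := hQsurj z
        have hv : v ∈ M ⊔ (R ⊔ Y) := by rw [hcM.codisjoint.eq_top]; trivial
        obtain ⟨m, hm, w, hw, rfl⟩ := Submodule.mem_sup.1 hv
        have : Q (m + w) = Q w := by
          rw [map_add, (hkerm m).2 hm, zero_add]
        rw [this]
        have : Q w ∈ (R ⊔ Y).map Q := Submodule.mem_map_of_mem hw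
        rwa [Submodule.map_sup] at this
    have hcompl₂' : IsCompl X₂' Y₂' := by
      constructor
      · rw [disjoint_iff, eq_bot_iff]
        rintro x ⟨hx1, hx2⟩
        obtain ⟨r, hr, hrx⟩ := hx1
        obtain ⟨y, hy, hyx⟩ := hx2
        have hsub : M'.mkQ (r - y) = 0 := by rw [map_sub, hrx, hyx, sub_self]
        rw [Submodule.mkQ_apply, Submodule.Quotient.mk_eq_zero] at hsub
        have hrRY : r - y ∈ R' ⊔ Y' := sub_mem (Submodule.mem_sup_left hr)
          (Submodule.mem_sup_right hy)
        have : r - y = 0 := (Submodule.mem_bot _).1 (hcM'.disjoint.le_bot ⟨hsub, hrRY⟩)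
        have hry : r = y := by rwa [sub_eq_zero] at this
        have hrXY : r ∈ X' ⊓ Y' := ⟨hR'X' hr, hry ▸ hy⟩
        have hr0 : r = 0 := (Submodule.mem_bot _).1 (hXY'.disjoint.le_bot hrXY)
        rw [← hrx, hr0, map_zero]
        exact Submodule.zero_mem _
      · rw [codisjoint_iff, eq_top_iff]
        rintro z -
        obtain ⟨v, rfl⟩ := Submodule.mkQ_surjective M' z
        have hv : v ∈ M' ⊔ (R' ⊔ Y') := by rw [hcM'.codisjoint.eq_top]; trivial
        obtain ⟨m, hm, w, hw, rfl⟩ := Submodule.mem_sup.1 hv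
        have : M'.mkQ (m + w) = M'.mkQ w := by
          rw [map_add, show M'.mkQ m = 0 by
            rw [Submodule.mkQ_apply, Submodule.Quotient.mk_eq_zero]; exact hm, zero_add]
        rw [this]
        have : M'.mkQ w ∈ (R' ⊔ Y').map M'.mkQ := Submodule.mem_map_of_mem hw
        rwa [Submodule.map_sup] at this
    -- the equivalences with the quotient pieces
    have hYker : ∀ x ∈ Y, Q x = 0 → x = 0 := by
      intro x hx h0
      have hxM := (hkerm x).1 h0
      exact (Submodule.mem_bot _).1 (hXY.disjoint.le_bot ⟨hMX hxM, hx⟩)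
    have hRker : ∀ x ∈ R, Q x = 0 → x = 0 := by
      intro x hx h0
      have hxM := (hkerm x).1 h0
      exact (Submodule.mem_bot _).1 (hdMR.le_bot ⟨hxM, hx⟩)
    have hY'ker : ∀ x ∈ Y', M'.mkQ x = 0 → x = 0 := by
      intro x hx h0
      rw [Submodule.mkQ_apply, Submodule.Quotient.mk_eq_zero] at h0
      exact (Submodule.mem_bot _).1 (hXY'.disjoint.le_bot ⟨hM'X' h0, hx⟩)
    have hR'ker : ∀ x ∈ R', M'.mkQ x = 0 → x = 0 := by
      intro x hx h0
      rw [Submodule.mkQ_apply, Submodule.Quotient.mk_eq_zero] at h0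
      exact (Submodule.mem_bot _).1 (hdM'R'.le_bot ⟨h0, hx⟩)
    set EY := equivMapOfKer Q Y hYker with hEYdef
    set EX := equivMapOfKer Q R hRker with hEXdef
    set EY' := equivMapOfKer M'.mkQ Y' hY'ker with hEY'def
    set EX' := equivMapOfKer M'.mkQ R' hR'ker with hEX'def
    set ψ₃ : ↥X₂ ≃ₗ[A] ↥X₂' := EX.symm.trans (ψ₂.trans EX') with hψ₃def
    set F₂ : Fin n → Submodule A (V ⧸ M') := fun i => (F i.succ).map Q with hF₂def
    have hF₂ : ∀ i, IsAtom (F₂ i) ∨ F₂ i = ⊥ := by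
      intro i
      rcases hF i.succ with hatom | hbot
      · left
        refine map_isAtom hatom ?_
        obtain ⟨x, hx, hx0⟩ := (Submodule.ne_bot_iff _).1 hatom.1
        have hxR : x ∈ R := le_iSup (fun k : Fin n => F k.succ) i hx
        have hQx : Q x ≠ 0 := by
          intro h0
          exact hx0 (hRker x hxR h0)
        exact (Submodule.ne_bot_iff _).2 ⟨Q x, Submodule.mem_map_of_mem hx, hQx⟩
      · right
        rw [hF₂def]
        simp only
        rw [hbot, Submodule.map_bot]
    have hsup₂ : X₂ = ⨆ i, F₂ i := by
      rw [hX₂def, hRdef, Submodule.map_iSup]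
    obtain ⟨θ⟩ := ih X₂ Y₂ X₂' Y₂' hcompl₂ hcompl₂' F₂ hF₂ hsup₂ ψ₃
    exact ⟨EY.trans (θ.trans EY'.symm)⟩
lemma exists_atom_decomp {V : Type*} [AddCommGroup V] [Module A V]
    [IsSemisimpleModule A V] {n : ℕ} {S : Fin n → Submodule A V}
    (hS : ∀ i, IsAtom (S i) ∨ S i = ⊥) (htop : (⨆ i, S i) = ⊤) (X : Submodule A V) :
    ∃ G : Fin n → Submodule A V, (∀ i, IsAtom (G i) ∨ G i = ⊥) ∧ X = ⨆ i, G i := by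
  obtain ⟨C, hC⟩ := exists_isCompl X
  set E : (V ⧸ C) ≃ₗ[A] ↥X := Submodule.quotientEquivOfIsCompl C X hC.symm with hEdef
  set Wm : V →ₗ[A] V := X.subtype ∘ₗ (E.toLinearMap ∘ₗ C.mkQ) with hWdef
  have hWrange : LinearMap.range Wm = X := by
    rw [hWdef, LinearMap.range_comp, LinearMap.range_comp, Submodule.range_mkQ,
      Submodule.map_top, LinearEquiv.range, Submodule.map_top, Submodule.range_subtype]
  refine ⟨fun i => (S i).map Wm, ?_, ?_⟩
  · intro i
    rcases hS i with hatom | hbot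
    · by_cases hne : (S i).map Wm = ⊥
      · exact Or.inr hne
      · exact Or.inl (map_isAtom hatom hne)
    · right; show (S i).map Wm = ⊥; rw [hbot, Submodule.map_bot]
  · rw [← Submodule.map_iSup, htop, Submodule.map_top, hWrange]

lemma idem_one_sub {p : A} (hp : p * p = p) : (1 - p) * (1 - p) = 1 - p := by
  have h : (1 - p) * (1 - p) = 1 - p - p + p * p := by noncomm_ring
  rw [h, hp]; abel

lemma compl_span_idem {p : A} (hp : p * p = p) :
    IsCompl ((Submodule.span A {p}).map (rad A).mkQ)
      ((Submodule.span A {1 - p}).map (rad A).mkQ) := by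
  constructor
  · rw [disjoint_iff, eq_bot_iff]
    rintro z ⟨hz1, hz2⟩
    obtain ⟨x, hx, hxz⟩ := hz1
    obtain ⟨y, hy, hyz⟩ := hz2
    have hxp : x * p = x := (mem_span_idem hp).1 hx
    have hyp : y * (1 - p) = y := (mem_span_idem (idem_one_sub hp)).1 hy
    have hxy : x - y ∈ rad A := by
      rw [Submodule.mkQ_apply] at hxz hyz
      exact (Submodule.Quotient.eq _).1 (hxz.trans hyz.symm)
    have hyp0 : y * p = 0 := by
      calc y * p = y * ((1 - p) * p) := by conv_lhs => rw [← hyp, mul_assoc]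
        _ = 0 := by rw [sub_mul, one_mul, hp, sub_self, mul_zero]
    have hxrad : x ∈ rad A := by
      have h2 := rad.mul_right hxy p
      rwa [sub_mul, hxp, hyp0, sub_zero] at h2
    rw [Submodule.mem_bot, ← hxz, Submodule.mkQ_apply, Submodule.Quotient.mk_eq_zero]
    exact hxrad
  · rw [codisjoint_iff, eq_top_iff]
    rintro z -
    obtain ⟨v, rfl⟩ := Submodule.mkQ_surjective _ z
    have h1 : (rad A).mkQ (v * p) ∈ (Submodule.span A {p}).map (rad A).mkQ :=
      Submodule.mem_map_of_mem ((mem_span_idem hp).2 (by rw [mul_assoc, hp]))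
    have h2 : (rad A).mkQ (v * (1 - p)) ∈ (Submodule.span A {1 - p}).map (rad A).mkQ :=
      Submodule.mem_map_of_mem
        ((mem_span_idem (idem_one_sub hp)).2 (by rw [mul_assoc, idem_one_sub hp]))
    have hv : (rad A).mkQ v = (rad A).mkQ (v * p) + (rad A).mkQ (v * (1 - p)) := by
      rw [← map_add]
      congr 1
      noncomm_ring
    rw [hv]
    exact Submodule.add_mem _ (Submodule.mem_sup_left h1) (Submodule.mem_sup_right h2)

/-- Right multiplication by `b` descends to `A ⧸ rad A`. -/
noncomputable def rmulQ (b : A) : (A ⧸ rad A) →ₗ[A] (A ⧸ rad A) :=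
  (rad A).liftQ ((rad A).mkQ ∘ₗ LinearMap.toSpanSingleton A A b)
    (fun x hx => by
      rw [LinearMap.mem_ker, LinearMap.comp_apply, LinearMap.toSpanSingleton_apply,
        smul_eq_mul, Submodule.mkQ_apply, Submodule.Quotient.mk_eq_zero]
      exact rad.mul_right hx b)

lemma rmulQ_mk (b x : A) : rmulQ b ((rad A).mkQ x) = (rad A).mkQ (x * b) := by
  rw [rmulQ, Submodule.mkQ_apply, Submodule.liftQ_apply, LinearMap.comp_apply,
    LinearMap.toSpanSingleton_apply, smul_eq_mul]

lemma final_conj {e f a b c d : A} (hee : e * e = e) (hff : f * f = f)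
    (hfa : f * a = a) (hae : a * e = a) (heb : e * b = b) (hbf : b * f = b)
    (hab : a * b = f) (hba : b * a = e)
    (hc : (1 - f) * c = c) (hce : c * (1 - e) = c)
    (hd : (1 - e) * d = d) (hdf : d * (1 - f) = d)
    (hcd : c * d = 1 - f) (hdc : d * c = 1 - e) :
    ∃ u : Aˣ, f = (u : A) * e * ((u⁻¹ : Aˣ) : A) := by
  have hadz : a * d = 0 := by
    calc a * d = a * ((1 - e) * d) := by rw [hd]
      _ = (a * (1 - e)) * d := by rw [mul_assoc]
      _ = 0 := by rw [mul_sub, mul_one, hae, sub_self, zero_mul]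
  have hcbz : c * b = 0 := by
    calc c * b = c * (1 - e) * b := by rw [hce]
      _ = c * ((1 - e) * b) := by rw [mul_assoc]
      _ = 0 := by rw [sub_mul, one_mul, heb, sub_self, mul_zero]
  have hbcz : b * c = 0 := by
    calc b * c = b * ((1 - f) * c) := by rw [hc]
      _ = (b * (1 - f)) * c := by rw [mul_assoc]
      _ = 0 := by rw [mul_sub, mul_one, hbf, sub_self, zero_mul]
  have hdaz : d * a = 0 := by
    have hdfz : d * f = 0 := by
      calc d * f = d * (1 - f) * f := by rw [hdf]
        _ = d * ((1 - f) * f) := by rw [mul_assoc]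
        _ = 0 := by rw [sub_mul, one_mul, hff, sub_self, mul_zero]
    calc d * a = d * (f * a) := by rw [hfa]
      _ = (d * f) * a := by rw [mul_assoc]
      _ = 0 := by rw [hdfz, zero_mul]
  have huv : (a + c) * (b + d) = 1 := by
    have h1 : (a + c) * (b + d) = a * b + a * d + (c * b + c * d) := by noncomm_ring
    rw [h1, hab, hadz, hcbz, hcd]; abel
  have hvu : (b + d) * (a + c) = 1 := by
    have h1 : (b + d) * (a + c) = b * a + b * c + (d * a + d * c) := by noncomm_ring
    rw [h1, hba, hbcz, hdaz, hdc]; abel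
  refine ⟨⟨a + c, b + d, huv, hvu⟩, ?_⟩
  show f = (a + c) * e * (b + d)
  have h1 : (a + c) * e = a := by
    have hcez : c * e = 0 := by
      calc c * e = c * ((1 - e) * e) := by conv_lhs => rw [← hce, mul_assoc]
        _ = 0 := by rw [sub_mul, one_mul, hee, sub_self, mul_zero]
    rw [add_mul, hae, hcez, add_zero]
  have h2 : a * (b + d) = f := by rw [mul_add, hab, hadz, add_zero]
  rw [h1, h2]
end SemiperfConj

open SemiperfConj

/-- In a semiperfect ring `A`, if `e` and `f` are primitive idempotents with
`Ae ≅ Af` as left `A`-modules, then `e` and `f` are conjugate by a unit of `A`. -/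
theorem primitive_idem_conj_of_iso {A : Type*} [Ring A] (hA : SemiperfectRing' A)
    (e f : A) (he : IsPrimitiveIdem e) (hf : IsPrimitiveIdem f)
    (hiso : Nonempty ((Submodule.span A {e} : Submodule A A) ≃ₗ[A]
      (Submodule.span A {f} : Submodule A A))) :
    ∃ u : Aˣ, f = (u : A) * e * ((u⁻¹ : Aˣ) : A) := by
  classical
  obtain ⟨φ⟩ := hiso
  have hee : e * e = e := he.1
  have hff : f * f = f := hf.1
  set J := rad A with hJdef
  -- Step 1: extract elements a, b implementing the isomorphism
  have heMem : e ∈ Submodule.span A {e} := (mem_span_idem hee).2 hee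
  have hfMem : f ∈ Submodule.span A {f} := (mem_span_idem hff).2 hff
  set bel := φ ⟨e, heMem⟩ with hbeldef
  set ael := φ.symm ⟨f, hfMem⟩ with haeldef
  set b : A := ↑bel with hbdef
  set a : A := ↑ael with hadef
  have hbf : b * f = b := (mem_span_idem hff).1 bel.2
  have hae : a * e = a := (mem_span_idem hee).1 ael.2
  have heb : e * b = b := by
    have h1 : (e • (⟨e, heMem⟩ : ↥(Submodule.span A {e}))) = ⟨e, heMem⟩ :=
      Subtype.ext (by show e • e = e; rw [smul_eq_mul, hee])
    have h2 := congrArg φ h1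
    rw [map_smul] at h2
    have h3 := congrArg Subtype.val h2
    simp only [SetLike.val_smul] at h3
    rw [smul_eq_mul] at h3
    exact h3
  have hfa : f * a = a := by
    have h1 : (f • (⟨f, hfMem⟩ : ↥(Submodule.span A {f}))) = ⟨f, hfMem⟩ :=
      Subtype.ext (by show f • f = f; rw [smul_eq_mul, hff])
    have h2 := congrArg φ.symm h1
    rw [map_smul] at h2
    have h3 := congrArg Subtype.val h2
    simp only [SetLike.val_smul] at h3
    rw [smul_eq_mul] at h3
    exact h3
  have hba : b * a = e := by
    have h1 : (b • (⟨f, hfMem⟩ : ↥(Submodule.span A {f}))) = bel := by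
      apply Subtype.ext
      show b • f = ↑bel
      rw [smul_eq_mul, hbf]
    have h2 := congrArg φ.symm h1
    rw [map_smul, hbeldef, LinearEquiv.symm_apply_apply] at h2
    have h3 := congrArg Subtype.val h2
    simp only [SetLike.val_smul] at h3
    rw [smul_eq_mul] at h3
    exact h3
  have hab : a * b = f := by
    have h1 : (a • (⟨e, heMem⟩ : ↥(Submodule.span A {e}))) = ael := by
      apply Subtype.ext
      show a • e = ↑ael
      rw [smul_eq_mul, hae]
    have h2 := congrArg φ h1
    rw [map_smul, haeldef, LinearEquiv.apply_symm_apply] at h2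
    have h3 := congrArg Subtype.val h2
    simp only [SetLike.val_smul] at h3
    rw [smul_eq_mul] at h3
    exact h3
  -- Step 2: the quotient A/J is a finite sum of simple modules
  obtain ⟨n, g, hgloc, hgorth, hgsum⟩ := hA
  have hgidem : ∀ i, g i * g i = g i := fun i => (hgloc i).1
  set S : Fin n → Submodule A (A ⧸ J) :=
    fun i => (Submodule.span A {g i}).map J.mkQ with hSdef
  have hSatom : ∀ i, IsAtom (S i) := by
    intro i
    constructor
    · intro hbot
      have hgmem : J.mkQ (g i) ∈ S i :=
        Submodule.mem_map_of_mem ((mem_span_idem (hgidem i)).2 (hgidem i))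
      rw [hbot, Submodule.mem_bot, Submodule.mkQ_apply,
        Submodule.Quotient.mk_eq_zero] at hgmem
      exact (hgloc i).2.1 (rad.idem_eq_zero hgmem (hgidem i))
    · intro Wsub hWsub
      by_contra hWne
      obtain ⟨w, hw, hw0⟩ := (Submodule.ne_bot_iff _).1 hWne
      obtain ⟨x, hxspan, hxw⟩ := hWsub.le hw
      have hxg : x * g i = x := (mem_span_idem (hgidem i)).1 hxspan
      have hxJ : x ∉ rad A := by
        intro hxJ
        apply hw0
        rw [← hxw, Submodule.mkQ_apply, Submodule.Quotient.mk_eq_zero]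
        exact hxJ
      rcases mem_rad_or_gen (hgloc i) hxg with hmem | ⟨r, hr⟩
      · exact hxJ hmem
      have hle : S i ≤ Wsub := by
        rintro _ ⟨t, htspan, rfl⟩
        have htg : t * g i = t := (mem_span_idem (hgidem i)).1 htspan
        have ht : t = (t * r) * x := by rw [mul_assoc, hr, htg]
        have hkey : J.mkQ t = (t * r) • w := by
          rw [← hxw, ← map_smul, smul_eq_mul, ← ht]
        rw [hkey]
        exact Wsub.smul_mem _ hw
      exact absurd (hWsub.trans_le hle) (lt_irrefl Wsub)
  have hStop : (⨆ i, S i) = ⊤ := by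
    rw [eq_top_iff]
    rintro z -
    obtain ⟨v, rfl⟩ := Submodule.mkQ_surjective J z
    have h1 : J.mkQ 1 ∈ ⨆ i, S i := by
      rw [show (1 : A) = ∑ i, g i from hgsum.symm, map_sum]
      exact Submodule.sum_mem _ (fun i _ => Submodule.mem_iSup_of_mem i
        (Submodule.mem_map_of_mem ((mem_span_idem (hgidem i)).2 (hgidem i))))
    have h2 : J.mkQ v = v • J.mkQ 1 := by
      rw [← map_smul, smul_eq_mul, mul_one]
    rw [h2]
    exact Submodule.smul_mem _ v h1
  haveI hss : IsSemisimpleModule A (A ⧸ J) := by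
    refine IsSemisimpleModule.of_sSup_simples_eq_top ?_
    refine le_antisymm le_top ?_
    rw [← hStop]
    exact iSup_le fun i => le_sSup (isSimpleModule_iff_isAtom.2 (hSatom i))
  -- Step 3: cancel to get an isomorphism of the complements
  set X : Submodule A (A ⧸ J) := (Submodule.span A {e}).map J.mkQ with hXdef
  set Y : Submodule A (A ⧸ J) := (Submodule.span A {1 - e}).map J.mkQ with hYdef
  set X' : Submodule A (A ⧸ J) := (Submodule.span A {f}).map J.mkQ with hX'def
  set Y' : Submodule A (A ⧸ J) := (Submodule.span A {1 - f}).map J.mkQ with hY'def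
  have hcXY : IsCompl X Y := compl_span_idem hee
  have hcXY' : IsCompl X' Y' := compl_span_idem hff
  have hmapb : ∀ z : ↥X, rmulQ b ↑z ∈ X' := by
    rintro ⟨_, t, ht, rfl⟩
    have htb : (t * b) * f = t * b := by rw [mul_assoc, hbf]
    rw [rmulQ_mk]
    exact Submodule.mem_map_of_mem ((mem_span_idem hff).2 htb)
  have hmapa : ∀ z : ↥X', rmulQ a ↑z ∈ X := by
    rintro ⟨_, t, ht, rfl⟩
    have hta : (t * a) * e = t * a := by rw [mul_assoc, hae]
    rw [rmulQ_mk]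
    exact Submodule.mem_map_of_mem ((mem_span_idem hee).2 hta)
  set ψ : ↥X ≃ₗ[A] ↥X' := LinearEquiv.ofLinear
    (((rmulQ b).domRestrict X).codRestrict X' hmapb)
    (((rmulQ a).domRestrict X').codRestrict X hmapa)
    (by
      apply LinearMap.ext
      rintro ⟨z, t, ht, rfl⟩
      apply Subtype.ext
      show rmulQ b (rmulQ a (J.mkQ t)) = J.mkQ t
      rw [rmulQ_mk, rmulQ_mk, mul_assoc, hab, (mem_span_idem hff).1 ht])
    (by
      apply LinearMap.ext
      rintro ⟨z, t, ht, rfl⟩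
      apply Subtype.ext
      show rmulQ a (rmulQ b (J.mkQ t)) = J.mkQ t
      rw [rmulQ_mk, rmulQ_mk, mul_assoc, hba, (mem_span_idem hee).1 ht]) with hψdef
  obtain ⟨G, hG, hGsup⟩ := exists_atom_decomp (fun i => Or.inl (hSatom i)) hStop X
  obtain ⟨Θ⟩ := cancel n X Y X' Y' hcXY hcXY' G hG hGsup ψ
  -- Step 4: extract elements c₁ d₁ from Θ
  have h1e : (1 - e) * (1 - e) = 1 - e := idem_one_sub hee
  have h1f : (1 - f) * (1 - f) = 1 - f := idem_one_sub hff
  have hy₀mem : J.mkQ (1 - e) ∈ Y :=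
    Submodule.mem_map_of_mem ((mem_span_idem h1e).2 h1e)
  have hy₀'mem : J.mkQ (1 - f) ∈ Y' :=
    Submodule.mem_map_of_mem ((mem_span_idem h1f).2 h1f)
  set y₀ : ↥Y := ⟨J.mkQ (1 - e), hy₀mem⟩ with hy₀def
  set y₀' : ↥Y' := ⟨J.mkQ (1 - f), hy₀'mem⟩ with hy₀'def
  set D := Θ y₀ with hDdef
  set C := Θ.symm y₀' with hCdef
  obtain ⟨d₁, hd₁span, hd₁⟩ := D.2
  obtain ⟨c₁, hc₁span, hc₁⟩ := C.2
  have hd₁f : d₁ * (1 - f) = d₁ := (mem_span_idem h1f).1 hd₁span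
  have hc₁e : c₁ * (1 - e) = c₁ := (mem_span_idem h1e).1 hc₁span
  have hsy₀ : (1 - e) • y₀ = y₀ := by
    apply Subtype.ext
    show (1 - e) • J.mkQ (1 - e) = J.mkQ (1 - e)
    rw [← map_smul, smul_eq_mul, h1e]
  have hsy₀' : (1 - f) • y₀' = y₀' := by
    apply Subtype.ext
    show (1 - f) • J.mkQ (1 - f) = J.mkQ (1 - f)
    rw [← map_smul, smul_eq_mul, h1f]
  -- congruences mod J
  have hD1 : (1 - e) * d₁ - d₁ ∈ J := by
    have h1 : (1 - e) • D = D := by rw [hDdef, ← map_smul, hsy₀]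
    have h2 := congrArg Subtype.val h1
    simp only [SetLike.val_smul] at h2
    rw [← hd₁, ← map_smul, smul_eq_mul] at h2
    exact (Submodule.Quotient.eq J).1 h2
  have hC1 : (1 - f) * c₁ - c₁ ∈ J := by
    have h1 : (1 - f) • C = C := by rw [hCdef, ← map_smul, hsy₀']
    have h2 := congrArg Subtype.val h1
    simp only [SetLike.val_smul] at h2
    rw [← hc₁, ← map_smul, smul_eq_mul] at h2
    exact (Submodule.Quotient.eq J).1 h2
  have hd₁c₁ : d₁ * c₁ - (1 - e) ∈ J := by
    have h1 : D = d₁ • y₀' := by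
      apply Subtype.ext
      show ↑D = d₁ • J.mkQ (1 - f)
      rw [← hd₁, ← map_smul, smul_eq_mul, hd₁f]
    have h2 : y₀ = d₁ • C := by
      rw [hCdef, ← map_smul, ← h1, hDdef, LinearEquiv.symm_apply_apply]
    have h3 := congrArg Subtype.val h2
    simp only [SetLike.val_smul] at h3
    rw [← hc₁, ← map_smul, smul_eq_mul] at h3
    exact (Submodule.Quotient.eq J).1 h3.symm
  have hc₁d₁ : c₁ * d₁ - (1 - f) ∈ J := by
    have h1 : C = c₁ • y₀ := by
      apply Subtype.ext
      show ↑C = c₁ • J.mkQ (1 - e)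
      rw [← hc₁, ← map_smul, smul_eq_mul, hc₁e]
    have h2 : y₀' = c₁ • D := by
      rw [hDdef, ← map_smul, ← h1, hCdef, LinearEquiv.apply_symm_apply]
    have h3 := congrArg Subtype.val h2
    simp only [SetLike.val_smul] at h3
    rw [← hd₁, ← map_smul, smul_eq_mul] at h3
    exact (Submodule.Quotient.eq J).1 h3.symm
  -- Step 5: correct c, d to exact complementary isomorphism data
  have Jtrans : ∀ {x y z : A}, x - y ∈ J → y - z ∈ J → x - z ∈ J := by
    intro x y z hxy hyz
    have := Submodule.add_mem J hxy hyz
    rwa [sub_add_sub_cancel] at this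
  set c : A := (1 - f) * c₁ * (1 - e) with hcdef
  set d : A := (1 - e) * d₁ * (1 - f) with hddef
  have hfc : (1 - f) * c = c := by rw [hcdef, ← mul_assoc, ← mul_assoc, h1f]
  have hce : c * (1 - e) = c := by rw [hcdef, mul_assoc ((1 - f) * c₁), h1e]
  have hed : (1 - e) * d = d := by rw [hddef, ← mul_assoc, ← mul_assoc, h1e]
  have hdf : d * (1 - f) = d := by rw [hddef, mul_assoc ((1 - e) * d₁), h1f]
  have hcd' : c * d - (1 - f) ∈ J := by
    have s1 : c * d - c * d₁ * (1 - f) ∈ J := by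
      have h0 := rad.sub_mul_left_right hD1 c (1 - f)
      have e10 : c * ((1 - e) * d₁) * (1 - f) = c * d := by
        rw [hddef, ← mul_assoc c ((1 - e) * d₁) (1 - f)]
      rwa [e10] at h0
    have s2 : c * d₁ * (1 - f) - (1 - f) * c₁ * d₁ * (1 - f) ∈ J := by
      have h0 := rad.sub_mul_left_right hD1 ((1 - f) * c₁) (1 - f)
      have e11 : (1 - f) * c₁ * ((1 - e) * d₁) * (1 - f) = c * d₁ * (1 - f) := by
        rw [hcdef, mul_assoc ((1 - f) * c₁) (1 - e) d₁]
      rwa [e11] at h0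
    have s3 : (1 - f) * c₁ * d₁ * (1 - f) - (1 - f) ∈ J := by
      have h0 := rad.sub_mul_left_right hc₁d₁ (1 - f) (1 - f)
      have e12 : (1 - f) * (c₁ * d₁) * (1 - f) = (1 - f) * c₁ * d₁ * (1 - f) := by
        rw [mul_assoc (1 - f) c₁ d₁]
      have e13 : (1 - f) * (1 - f) * (1 - f) = 1 - f := by rw [h1f, h1f]
      rwa [e12, e13] at h0
    exact Jtrans s1 (Jtrans s2 s3)
  have hdc' : d * c - (1 - e) ∈ J := by
    have s1 : d * c - d * c₁ * (1 - e) ∈ J := by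
      have h0 := rad.sub_mul_left_right hC1 d (1 - e)
      have e10 : d * ((1 - f) * c₁) * (1 - e) = d * c := by
        rw [hcdef, ← mul_assoc d ((1 - f) * c₁) (1 - e)]
      rwa [e10] at h0
    have s2 : d * c₁ * (1 - e) - (1 - e) * d₁ * c₁ * (1 - e) ∈ J := by
      have h0 := rad.sub_mul_left_right hC1 ((1 - e) * d₁) (1 - e)
      have e11 : (1 - e) * d₁ * ((1 - f) * c₁) * (1 - e) = d * c₁ * (1 - e) := by
        rw [hddef, mul_assoc ((1 - e) * d₁) (1 - f) c₁]
      rwa [e11] at h0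
    have s3 : (1 - e) * d₁ * c₁ * (1 - e) - (1 - e) ∈ J := by
      have h0 := rad.sub_mul_left_right hd₁c₁ (1 - e) (1 - e)
      have e12 : (1 - e) * (d₁ * c₁) * (1 - e) = (1 - e) * d₁ * c₁ * (1 - e) := by
        rw [mul_assoc (1 - e) d₁ c₁]
      have e13 : (1 - e) * (1 - e) * (1 - e) = 1 - e := by rw [h1e, h1e]
      rwa [e12, e13] at h0
    exact Jtrans s1 (Jtrans s2 s3)
  -- corner inverse to make c * d exactly 1 - f
  have hjmem : (1 - f) - c * d ∈ J := by
    have := Submodule.neg_mem J hcd'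
    rwa [neg_sub] at this
  have hjl : (1 - f) * ((1 - f) - c * d) = (1 - f) - c * d := by
    rw [mul_sub, h1f, ← mul_assoc, hfc]
  have hjr : ((1 - f) - c * d) * (1 - f) = (1 - f) - c * d := by
    rw [sub_mul, h1f, mul_assoc, hdf]
  obtain ⟨s, hsh, hhs, hs1, hs2, hsJ⟩ := corner_inv h1f hjmem hjl hjr
  have hsub : (1 - f) - ((1 - f) - c * d) = c * d := by abel
  rw [hsub] at hs1 hs2
  set d' : A := d * s with hd'def
  have hed' : (1 - e) * d' = d' := by rw [hd'def, ← mul_assoc, hed]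
  have hd'f : d' * (1 - f) = d' := by rw [hd'def, mul_assoc, hsh]
  have hcd'' : c * d' = 1 - f := by rw [hd'def, ← mul_assoc, hs1]
  -- show d' * c = 1 - e exactly
  have hd'c : d' * c - (1 - e) ∈ J := by
    have s1 : d' * c - d * c ∈ J := by
      have h0 := rad.sub_mul_left_right hsJ d c
      have e14 : d * s * c = d' * c := by rw [hd'def]
      have e15 : d * (1 - f) * c = d * c := by rw [hdf]
      rwa [e14, e15] at h0
    exact Jtrans s1 hdc'
  have hkidem : ((1 - e) - d' * c) * ((1 - e) - d' * c) = (1 - e) - d' * c := by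
    have ha1 : (1 - e) * (d' * c) = d' * c := by rw [← mul_assoc, hed']
    have ha2 : (d' * c) * (1 - e) = d' * c := by rw [mul_assoc, hce]
    have ha3 : (d' * c) * (d' * c) = d' * c := by
      calc (d' * c) * (d' * c) = d' * (c * d') * c := by
            rw [mul_assoc, ← mul_assoc c d' c, ← mul_assoc d' (c * d') c]
        _ = d' * ((1 - f) * c) := by rw [hcd'', mul_assoc]
        _ = d' * c := by rw [hfc]
    have expand : ((1 - e) - d' * c) * ((1 - e) - d' * c) =
        (1 - e) * (1 - e) - (1 - e) * (d' * c) - (d' * c) * (1 - e)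
          + (d' * c) * (d' * c) := by noncomm_ring
    rw [expand, h1e, ha1, ha2, ha3]
    abel
  have hkJ : (1 - e) - d' * c ∈ J := by
    have := Submodule.neg_mem J hd'c
    rwa [neg_sub] at this
  have hk0 : (1 - e) - d' * c = 0 := rad.idem_eq_zero hkJ hkidem
  have hd'c' : d' * c = 1 - e := by
    have := sub_eq_zero.1 hk0
    exact this.symm
  -- Step 6: assemble the unit
  exact final_conj hee hff hfa hae heb hbf hab hba hfc hce hed' hd'f hcd'' hd'c'
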